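/- Let U ⊆ ℝ² be an open neighborhood of 0 and let f = (x,y,z,p,q) : U → ℝ⁵ be a smooth map whose total derivative Df(0) : ℝ² → ℝ⁵ is injective, and which satisfies the contact condition and the Hess = 1 condition on U. If neither the derivative at 0 of π₁∘f = (x,y,z) nor the derivative at 0 of π₂∘f = (p, q, p·x + q·y − z) is injective, then the derivative at 0 of π₁∘f has rank exactly 1 and the derivative at 0 of π₂∘f has rank exactly 1 (rank meaning the finite dimension of the range of the continuous linear map). -/

import Mathlib

noncomputable section

/-- Partial derivative in the direction `(1,0)`. -/
def pu (g : ℝ × ℝ → ℝ) (a : ℝ × ℝ) : ℝ := fderiv ℝ g a (1, 0)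

/-- Partial derivative in the direction `(0,1)`. -/
def pv (g : ℝ × ℝ → ℝ) (a : ℝ × ℝ) : ℝ := fderiv ℝ g a (0, 1)

/-- Jacobian determinant `g_u h_v - g_v h_u`. -/
def Jac (g h : ℝ × ℝ → ℝ) (a : ℝ × ℝ) : ℝ := pu g a * pv h a - pv g a * pu h a

/-- If both Legendrian projections of a geometric solution to Hess = 1 are singular at 0,
then both have rank exactly 1 at 0. -/
theorem stmt1 (U : Set (ℝ × ℝ)) (hU : IsOpen U) (h0 : (0 : ℝ × ℝ) ∈ U)
    (x y z p q : ℝ × ℝ → ℝ)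
    (hx : ContDiffOn ℝ (⊤ : ℕ∞) x U) (hy : ContDiffOn ℝ (⊤ : ℕ∞) y U)
    (hz : ContDiffOn ℝ (⊤ : ℕ∞) z U) (hp : ContDiffOn ℝ (⊤ : ℕ∞) p U)
    (hq : ContDiffOn ℝ (⊤ : ℕ∞) q U)
    (hDf : Function.Injective (fderiv ℝ (fun a => (x a, y a, z a, p a, q a)) 0))
    (hcontact : ∀ a ∈ U, pu z a = p a * pu x a + q a * pu y a ∧
      pv z a = p a * pv x a + q a * pv y a)
    (hhess : ∀ a ∈ U, Jac x y a = Jac p q a)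
    (h1 : ¬ Function.Injective (fderiv ℝ (fun a => (x a, y a, z a)) 0))
    (h2 : ¬ Function.Injective
      (fderiv ℝ (fun a => (p a, q a, p a * x a + q a * y a - z a)) 0)) :
    Module.finrank ℝ (LinearMap.range (fderiv ℝ (fun a => (x a, y a, z a)) 0 : ℝ × ℝ →ₗ[ℝ] ℝ × ℝ × ℝ)) = 1 ∧
    Module.finrank ℝ (LinearMap.range
      (fderiv ℝ (fun a => (p a, q a, p a * x a + q a * y a - z a)) 0 : ℝ × ℝ →ₗ[ℝ] ℝ × ℝ × ℝ)) = 1 := by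
  have hmem := hU.mem_nhds h0
  have dx : DifferentiableAt ℝ x 0 := (hx.contDiffAt hmem).differentiableAt (by simp)
  have dy : DifferentiableAt ℝ y 0 := (hy.contDiffAt hmem).differentiableAt (by simp)
  have dz : DifferentiableAt ℝ z 0 := (hz.contDiffAt hmem).differentiableAt (by simp)
  have dp : DifferentiableAt ℝ p 0 := (hp.contDiffAt hmem).differentiableAt (by simp)
  have dq : DifferentiableAt ℝ q 0 := (hq.contDiffAt hmem).differentiableAt (by simp)
  have dw : DifferentiableAt ℝ (fun a => p a * x a + q a * y a - z a) 0 :=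
    ((dp.mul dx).add (dq.mul dy)).sub dz
  set A := fderiv ℝ (fun a => (x a, y a, z a)) 0 with hA
  set B := fderiv ℝ (fun a => (p a, q a, p a * x a + q a * y a - z a)) 0 with hB
  set L := fderiv ℝ (fun a => (x a, y a, z a, p a, q a)) 0 with hL
  have hAeq : A = (fderiv ℝ x 0).prod ((fderiv ℝ y 0).prod (fderiv ℝ z 0)) :=
    (HasFDerivAt.prodMk dx.hasFDerivAt (HasFDerivAt.prodMk dy.hasFDerivAt dz.hasFDerivAt)).fderiv
  have hBeq : B = (fderiv ℝ p 0).prod ((fderiv ℝ q 0).prod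
      (fderiv ℝ (fun a => p a * x a + q a * y a - z a) 0)) :=
    (HasFDerivAt.prodMk dp.hasFDerivAt (HasFDerivAt.prodMk dq.hasFDerivAt dw.hasFDerivAt)).fderiv
  have hLeq : L = (fderiv ℝ x 0).prod ((fderiv ℝ y 0).prod ((fderiv ℝ z 0).prod
      ((fderiv ℝ p 0).prod (fderiv ℝ q 0)))) :=
    (HasFDerivAt.prodMk dx.hasFDerivAt (HasFDerivAt.prodMk dy.hasFDerivAt (HasFDerivAt.prodMk dz.hasFDerivAt
      (HasFDerivAt.prodMk dp.hasFDerivAt dq.hasFDerivAt)))).fderiv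
  -- kernels intersect trivially
  have hker : LinearMap.ker (A : ℝ × ℝ →ₗ[ℝ] ℝ × ℝ × ℝ) ⊓ LinearMap.ker (B : ℝ × ℝ →ₗ[ℝ] ℝ × ℝ × ℝ) = ⊥ := by
    rw [eq_bot_iff]
    rintro v ⟨hvA, hvB⟩
    simp only [SetLike.mem_coe, LinearMap.mem_ker, ContinuousLinearMap.coe_coe] at hvA hvB
    have hAv := hvA
    have hBv := hvB
    rw [hAeq] at hAv
    rw [hBeq] at hBv
    simp only [ContinuousLinearMap.prod_apply, Prod.mk_eq_zero] at hAv hBv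
    have : L v = 0 := by
      rw [hLeq]
      simp only [ContinuousLinearMap.prod_apply, Prod.mk_eq_zero]
      exact ⟨hAv.1, hAv.2.1, hAv.2.2, hBv.1, hBv.2.1⟩
    have hv0 : v = 0 := hDf (show L v = L 0 by rw [this, map_zero])
    simp [hv0]
  have hfin : Module.finrank ℝ (ℝ × ℝ) = 2 := by simp
  have hrnA : Module.finrank ℝ (LinearMap.range (A : ℝ × ℝ →ₗ[ℝ] ℝ × ℝ × ℝ)) + Module.finrank ℝ (LinearMap.ker (A : ℝ × ℝ →ₗ[ℝ] ℝ × ℝ × ℝ)) = 2 := by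
    have h := LinearMap.finrank_range_add_finrank_ker (A : (ℝ × ℝ) →ₗ[ℝ] ℝ × ℝ × ℝ)
    rw [hfin] at h
    exact h
  have hrnB : Module.finrank ℝ (LinearMap.range (B : ℝ × ℝ →ₗ[ℝ] ℝ × ℝ × ℝ)) + Module.finrank ℝ (LinearMap.ker (B : ℝ × ℝ →ₗ[ℝ] ℝ × ℝ × ℝ)) = 2 := by
    have h := LinearMap.finrank_range_add_finrank_ker (B : (ℝ × ℝ) →ₗ[ℝ] ℝ × ℝ × ℝ)
    rw [hfin] at h
    exact h
  have hk1 : LinearMap.ker (A : ℝ × ℝ →ₗ[ℝ] ℝ × ℝ × ℝ) ≠ ⊥ := by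
    intro h
    refine h1 fun a b hab => sub_eq_zero.mp ?_
    exact LinearMap.ker_eq_bot'.mp h (a - b) (by rw [map_sub, ContinuousLinearMap.coe_coe, hab, sub_self])
  have hk2 : LinearMap.ker (B : ℝ × ℝ →ₗ[ℝ] ℝ × ℝ × ℝ) ≠ ⊥ := by
    intro h
    refine h2 fun a b hab => sub_eq_zero.mp ?_
    exact LinearMap.ker_eq_bot'.mp h (a - b) (by rw [map_sub, ContinuousLinearMap.coe_coe, hab, sub_self])
  have hkA : 0 < Module.finrank ℝ (LinearMap.ker (A : ℝ × ℝ →ₗ[ℝ] ℝ × ℝ × ℝ)) := by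
    haveI : Nontrivial (LinearMap.ker (A : ℝ × ℝ →ₗ[ℝ] ℝ × ℝ × ℝ)) := Submodule.nontrivial_iff_ne_bot.mpr hk1
    exact Module.finrank_pos
  have hkB : 0 < Module.finrank ℝ (LinearMap.ker (B : ℝ × ℝ →ₗ[ℝ] ℝ × ℝ × ℝ)) := by
    haveI : Nontrivial (LinearMap.ker (B : ℝ × ℝ →ₗ[ℝ] ℝ × ℝ × ℝ)) := Submodule.nontrivial_iff_ne_bot.mpr hk2
    exact Module.finrank_pos
  have hsup := Submodule.finrank_sup_add_finrank_inf_eq (LinearMap.ker (A : ℝ × ℝ →ₗ[ℝ] ℝ × ℝ × ℝ)) (LinearMap.ker (B : ℝ × ℝ →ₗ[ℝ] ℝ × ℝ × ℝ))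
  rw [hker] at hsup
  have hsup2 : Module.finrank ℝ ↥(LinearMap.ker (A : ℝ × ℝ →ₗ[ℝ] ℝ × ℝ × ℝ) ⊔ LinearMap.ker (B : ℝ × ℝ →ₗ[ℝ] ℝ × ℝ × ℝ)) ≤ 2 := by
    simpa [hfin] using (Submodule.finrank_le (LinearMap.ker (A : ℝ × ℝ →ₗ[ℝ] ℝ × ℝ × ℝ) ⊔ LinearMap.ker (B : ℝ × ℝ →ₗ[ℝ] ℝ × ℝ × ℝ)))
  have hbot : Module.finrank ℝ (⊥ : Submodule ℝ (ℝ × ℝ)) = 0 := finrank_bot ℝ _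
  constructor <;> omega
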